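/- Fix distinct nonzero complex numbers α₁,…,αₙ and positive integers p₁,…,pₙ. The discrete Wronskian of the family of quasi-exponentials {αᵢˣ xᵖ : i=1,…,n, p=0,…,pᵢ−1} equals ∏ᵢ( αᵢ^{pᵢx} ∏_{s=1}^{pᵢ−1} αᵢˢ s! ) · ∏_{i<j} (αⱼ − αᵢ)^{pᵢpⱼ}; in particular, it is a nowhere-vanishing function of x. -/
import Mathlib

open Polynomial Finset

/-- The operator `P ↦ x·P + X·P'`, encoding multiplication of the `j`-th
coefficient by `(x + j)`. -/
noncomputable def qop (x : ℂ) (P : Polynomial ℂ) : Polynomial ℂ :=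
  Polynomial.C x * P + Polynomial.X * Polynomial.derivative P

lemma qop_coeff (x : ℂ) (P : Polynomial ℂ) (j : ℕ) :
    (qop x P).coeff j = (x + j) * P.coeff j := by
  unfold qop
  cases j with
  | zero => simp [coeff_X_mul]
  | succ t => simp [coeff_X_mul, coeff_derivative]; ring

lemma qop_natDegree_le (x : ℂ) (P : Polynomial ℂ) : (qop x P).natDegree ≤ P.natDegree := by
  apply natDegree_le_iff_coeff_eq_zero.mpr
  intro j hj
  rw [qop_coeff, coeff_eq_zero_of_natDegree_lt hj, mul_zero]

lemma qop_sum (x α : ℂ) (B : ℕ) :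
    ∀ (m : ℕ) (P : Polynomial ℂ), P.natDegree < B →
      ∑ j ∈ Finset.range B, P.coeff j * α ^ j * (x + j) ^ m
        = Polynomial.eval α ((qop x)^[m] P) := by
  intro m
  induction m with
  | zero =>
    intro P hP
    simp only [pow_zero, mul_one, Function.iterate_zero, id]
    rw [Polynomial.eval_eq_sum_range' hP α]
  | succ m ih =>
    intro P hP
    rw [Function.iterate_succ_apply]
    rw [← ih (qop x P) (lt_of_le_of_lt (qop_natDegree_le x P) hP)]
    apply Finset.sum_congr rfl
    intro j _
    rw [qop_coeff]
    ring

lemma qop_step (x α : ℂ) (s : ℕ) (Q : Polynomial ℂ) :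
    qop x ((X - C α) ^ (s + 1) * Q)
      = (X - C α) ^ s *
        (C x * (X - C α) * Q + X * (C ((s : ℂ) + 1) * Q + (X - C α) * derivative Q)) := by
  unfold qop
  rw [derivative_mul, derivative_pow_succ]
  simp only [derivative_sub, derivative_X, derivative_C, sub_zero, mul_one]
  ring

lemma qop_iter_factor (x α : ℂ) : ∀ (t u : ℕ) (Q : Polynomial ℂ),
    ∃ R : Polynomial ℂ, (qop x)^[t] ((X - C α) ^ (u + t) * Q) = (X - C α) ^ u * R ∧
      R.eval α = (∏ s ∈ Finset.range t, ((u : ℂ) + t - s)) * α ^ t * Q.eval α := by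
  intro t
  induction t with
  | zero => intro u Q; exact ⟨Q, by simp⟩
  | succ t ih =>
    intro u Q
    have hP : (X - C α) ^ (u + (t + 1)) * Q = (X - C α) ^ ((u + t) + 1) * Q := by ring_nf
    set R₁ : Polynomial ℂ :=
      C x * (X - C α) * Q + X * (C (((u + t : ℕ) : ℂ) + 1) * Q + (X - C α) * derivative Q)
      with hR₁
    obtain ⟨R, hR, hRe⟩ := ih u R₁
    refine ⟨R, ?_, ?_⟩
    · rw [hP, Function.iterate_succ_apply, qop_step, hR]
    · have hR1e : R₁.eval α = ((u : ℂ) + t + 1) * α * Q.eval α := by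
        simp [hR₁]; push_cast; ring
      have hprod : (∏ s ∈ Finset.range (t + 1), ((u : ℂ) + ((t + 1 : ℕ) : ℂ) - s))
          = ((u : ℂ) + t + 1) * ∏ s ∈ Finset.range t, ((u : ℂ) + t - s) := by
        rw [Finset.prod_range_succ']
        have h1 : ∀ s ∈ Finset.range t,
            ((u : ℂ) + ((t + 1 : ℕ) : ℂ) - ((s + 1 : ℕ) : ℂ)) = ((u : ℂ) + t - s) := by
          intro s _; push_cast; ring
        rw [Finset.prod_congr rfl h1]
        push_cast; ring
      rw [hRe, hR1e, hprod]
      push_cast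
      ring

lemma qop_iter_eval_zero (x α : ℂ) (m : ℕ) (P : Polynomial ℂ)
    (h : (X - C α) ^ (m + 1) ∣ P) :
    Polynomial.eval α ((qop x)^[m] P) = 0 := by
  obtain ⟨Q, hQ⟩ := h
  obtain ⟨R, hR, -⟩ := qop_iter_factor x α m 1 Q
  rw [hQ, show m + 1 = 1 + m by ring, hR]
  simp

lemma prod_range_sub_factorial (m : ℕ) :
    (∏ s ∈ Finset.range m, ((m : ℂ) - s)) = (Nat.factorial m : ℂ) := by
  have h1 : ∀ s ∈ Finset.range m, ((m : ℂ) - s) = (((m - s : ℕ) : ℂ)) := by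
    intro s hs
    rw [Nat.cast_sub (le_of_lt (Finset.mem_range.mp hs))]
  rw [Finset.prod_congr rfl h1, ← Nat.cast_prod]
  congr 1
  have h2 : ∀ j ∈ Finset.range m, m - j = (fun j => j + 1) (m - 1 - j) := by
    intro j hj; have := Finset.mem_range.mp hj; simp only; omega
  rw [Finset.prod_congr rfl h2, Finset.prod_range_reflect (fun j => j + 1) m,
    Finset.prod_range_add_one_eq_factorial]

lemma qop_iter_eval_diag (x α : ℂ) (m : ℕ) (Q : Polynomial ℂ) :
    Polynomial.eval α ((qop x)^[m] ((X - C α) ^ m * Q))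
      = (Nat.factorial m : ℂ) * α ^ m * Q.eval α := by
  obtain ⟨R, hR, hRe⟩ := qop_iter_factor x α m 0 Q
  simp only [Nat.zero_add] at hR
  rw [hR]
  simp only [pow_zero, one_mul, eval_mul, eval_pow, eval_one]
  rw [hRe, ← prod_range_sub_factorial m]
  norm_num

lemma card_filter_val_lt {P : ℕ} (m : ℕ) (hm : m ≤ P) :
    (Finset.univ.filter (fun t : Fin P => (t : ℕ) < m)).card = m := by
  have h : ∀ j ∈ Finset.range m, j < P := fun j hj => lt_of_lt_of_le (Finset.mem_range.mp hj) hm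
  have heq : Finset.univ.filter (fun t : Fin P => (t : ℕ) < m) = (Finset.range m).attachFin h := by
    ext t
    simp [Finset.mem_attachFin]
  rw [heq, Finset.card_attachFin, Finset.card_range]


/-- The discrete Wronskian of functions `g 0, …, g (N-1)`. -/
noncomputable def dWr {N : ℕ} (g : Fin N → ℂ → ℂ) (x : ℂ) : ℂ :=
  Matrix.det (Matrix.of fun i j : Fin N => g i (x + (j : ℕ)))

theorem stmt5aux {n N : ℕ} (α : Fin n → ℂ) (p : Fin n → ℕ)
    (hα0 : ∀ i, α i ≠ 0) (hαinj : Function.Injective α) (hp : ∀ i, 0 < p i)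
    (e : (Σ i : Fin n, Fin (p i)) ≃ Fin N)
    (he : ∀ s t : Σ i : Fin n, Fin (p i),
      (s.1 < t.1 ∨ (s.1 = t.1 ∧ s.2.val < t.2.val)) → e s < e t)
    (F : Fin N → ℂ → ℂ)
    (hF : ∀ (s : Σ i : Fin n, Fin (p i)) (x : ℂ),
      F (e s) x = Complex.exp (x * Complex.log (α s.1)) * x ^ (s.2 : ℕ))
    (x : ℂ) :
      dWr F x =
        (∏ i, (Complex.exp (x * Complex.log (α i)) ^ p i *
          ∏ s ∈ Finset.Ico 1 (p i), α i ^ s * (Nat.factorial s : ℂ))) *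
        ∏ j, ∏ i ∈ Finset.univ.filter (fun i => i < j), (α j - α i) ^ (p i * p j) ∧
      dWr F x ≠ 0 := by
  classical
  have htri : ∀ s t : Σ i : Fin n, Fin (p i),
      s = t ∨ (s.1 < t.1 ∨ (s.1 = t.1 ∧ s.2.val < t.2.val))
        ∨ (t.1 < s.1 ∨ (t.1 = s.1 ∧ t.2.val < s.2.val)) := by
    rintro ⟨s1, s2⟩ ⟨t1, t2⟩
    rcases lt_trichotomy s1 t1 with h | h | h
    · exact Or.inr (Or.inl (Or.inl h))
    · subst h
      rcases lt_trichotomy s2.val t2.val with h2 | h2 | h2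
      · exact Or.inr (Or.inl (Or.inr ⟨rfl, h2⟩))
      · exact Or.inl (by rw [Fin.ext h2])
      · exact Or.inr (Or.inr (Or.inr ⟨rfl, h2⟩))
    · exact Or.inr (Or.inr (Or.inl h))
  have hee : ∀ s t : Σ i : Fin n, Fin (p i),
      e s < e t ↔ (s.1 < t.1 ∨ (s.1 = t.1 ∧ s.2.val < t.2.val)) := by
    intro s t
    constructor
    · intro h
      rcases htri s t with rfl | h' | h'
      · exact absurd h (lt_irrefl _)
      · exact h'
      · exact absurd (he t s h') (not_lt_of_gt h)
    · exact he s t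
  -- the Newton-type polynomials
  set P : Fin N → Polynomial ℂ :=
    fun k => ∏ r ∈ Finset.univ.filter (fun r => r < k), (X - C (α (e.symm r).1)) with hP
  have hPmonic : ∀ k, (P k).Monic := by
    intro k
    exact monic_prod_of_monic _ _ (fun r _ => monic_X_sub_C _)
  have hcardIio : ∀ k : Fin N, (Finset.univ.filter (fun r : Fin N => r < k)).card = k.val := by
    intro k
    have h1 : (Finset.univ.filter (fun r : Fin N => r < k))
        = (Finset.univ.filter (fun r : Fin N => (r : ℕ) < (k : ℕ))) := by
      apply Finset.filter_congr; intro r _; exact Fin.lt_def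
    rw [h1, card_filter_val_lt _ (le_of_lt k.isLt)]
  have hPdeg : ∀ k, (P k).natDegree = (k : ℕ) := by
    intro k
    rw [hP]
    rw [natDegree_prod_of_monic _ _ (fun r _ => monic_X_sub_C _)]
    simp only [natDegree_X_sub_C, Finset.sum_const, smul_eq_mul, mul_one]
    exact hcardIio k
  -- matrices
  set M : Matrix (Fin N) (Fin N) ℂ :=
    Matrix.of (fun r j : Fin N =>
      α (e.symm r).1 ^ (j : ℕ) * (x + (j : ℕ)) ^ ((e.symm r).2 : ℕ)) with hM
  set Cm : Matrix (Fin N) (Fin N) ℂ := Matrix.of (fun j k : Fin N => (P k).coeff j) with hCm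
  set A : Matrix (Fin N) (Fin N) ℂ := M * Cm with hA
  have hAentry : ∀ r k : Fin N,
      A r k = Polynomial.eval (α (e.symm r).1)
        ((qop x)^[((e.symm r).2 : ℕ)] (P k)) := by
    intro r k
    have h1 : A r k = ∑ j : Fin N,
        (P k).coeff (j : ℕ) * α (e.symm r).1 ^ (j : ℕ) * (x + (j : ℕ)) ^ ((e.symm r).2 : ℕ) := by
      rw [hA, Matrix.mul_apply]
      apply Finset.sum_congr rfl
      intro j _
      simp only [hM, hCm, Matrix.of_apply]
      ring
    rw [h1]
    rw [Fin.sum_univ_eq_sum_range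
      (fun j => (P k).coeff j * α (e.symm r).1 ^ j * (x + (j : ℕ)) ^ ((e.symm r).2 : ℕ)) N]
    exact qop_sum x _ N _ (P k) (by rw [hPdeg k]; exact k.isLt)
  -- divisibility above the diagonal
  have hdvd : ∀ r k : Fin N, r < k →
      (X - C (α (e.symm r).1)) ^ (((e.symm r).2 : ℕ) + 1) ∣ P k := by
    intro r k hrk
    have hinj : Function.Injective (fun t : Fin (p (e.symm r).1) => e ⟨(e.symm r).1, t⟩) := by
      intro t1 t2 h12
      have h := e.injective h12
      exact eq_of_heq (Sigma.mk.inj_iff.mp h).2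
    have hsub : (Finset.univ.filter
          (fun t : Fin (p (e.symm r).1) => (t : ℕ) ≤ ((e.symm r).2 : ℕ))).image
          (fun t => e ⟨(e.symm r).1, t⟩) ⊆ Finset.univ.filter (fun r' => r' < k) := by
      intro r' hr'
      obtain ⟨t, ht, rfl⟩ := Finset.mem_image.mp hr'
      have ht' : (t : ℕ) ≤ ((e.symm r).2 : ℕ) := (Finset.mem_filter.mp ht).2
      rcases lt_or_eq_of_le ht' with h | h
      · refine Finset.mem_filter.mpr ⟨Finset.mem_univ _, lt_trans ?_ hrk⟩
        have : e ⟨(e.symm r).1, t⟩ < e (e.symm r) := by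
          apply he
          right
          exact ⟨rfl, h⟩
        rwa [e.apply_symm_apply] at this
      · have : (⟨(e.symm r).1, t⟩ : Σ i : Fin n, Fin (p i)) = e.symm r := by
          have : t = (e.symm r).2 := Fin.ext h
          rw [this]
        rw [this, e.apply_symm_apply]
        exact Finset.mem_filter.mpr ⟨Finset.mem_univ _, hrk⟩
    have hprodS : ∏ r' ∈ (Finset.univ.filter
          (fun t : Fin (p (e.symm r).1) => (t : ℕ) ≤ ((e.symm r).2 : ℕ))).image
          (fun t => e ⟨(e.symm r).1, t⟩), (X - C (α (e.symm r').1))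
        = (X - C (α (e.symm r).1)) ^ (((e.symm r).2 : ℕ) + 1) := by
      rw [Finset.prod_image (fun t1 _ t2 _ h => hinj h)]
      have hconst : ∀ t ∈ (Finset.univ.filter
            (fun t : Fin (p (e.symm r).1) => (t : ℕ) ≤ ((e.symm r).2 : ℕ))),
          (X - C (α ((e.symm (e ⟨(e.symm r).1, t⟩)).1))) = (X - C (α (e.symm r).1)) := by
        intro t _
        rw [e.symm_apply_apply]
      rw [Finset.prod_congr rfl hconst, Finset.prod_const]
      congr 1
      have h1 : (Finset.univ.filter
            (fun t : Fin (p (e.symm r).1) => (t : ℕ) ≤ ((e.symm r).2 : ℕ)))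
          = (Finset.univ.filter
            (fun t : Fin (p (e.symm r).1) => (t : ℕ) < ((e.symm r).2 : ℕ) + 1)) := by
        apply Finset.filter_congr; intro t _; exact Nat.lt_succ_iff.symm
      rw [h1, card_filter_val_lt _ (e.symm r).2.isLt]
    rw [hP, ← hprodS]
    exact Finset.prod_dvd_prod_of_subset _ _ _ hsub
  -- diagonal factorization
  have hfact : ∀ r : Fin N, P r
      = (X - C (α (e.symm r).1)) ^ ((e.symm r).2 : ℕ) *
        ∏ l ∈ Finset.univ.filter (fun l => l < (e.symm r).1), (X - C (α l)) ^ (p l) := by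
    intro r
    have htrans : P r = ∏ s' ∈ Finset.univ.filter
        (fun s' : Σ i : Fin n, Fin (p i) =>
          s'.1 < (e.symm r).1 ∨ (s'.1 = (e.symm r).1 ∧ s'.2.val < ((e.symm r).2 : ℕ))),
        (X - C (α s'.1)) := by
      rw [hP]
      apply Finset.prod_bij (i := fun r' _ => e.symm r')
      · intro r' hr'
        have h1 : r' < r := (Finset.mem_filter.mp hr').2
        refine Finset.mem_filter.mpr ⟨Finset.mem_univ _, ?_⟩
        have h2 : e (e.symm r') < e (e.symm r) := by
          rwa [e.apply_symm_apply, e.apply_symm_apply]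
        exact (hee _ _).mp h2
      · intro r1 _ r2 _ h12
        exact e.symm.injective h12
      · intro s' hs'
        refine ⟨e s', ?_, by simp⟩
        refine Finset.mem_filter.mpr ⟨Finset.mem_univ _, ?_⟩
        have h1 := (Finset.mem_filter.mp hs').2
        have h2 : e s' < e (e.symm r) := (hee _ _).mpr h1
        rwa [e.apply_symm_apply] at h2
      · intro r' _
        rfl
    rw [htrans]
    have hunion : Finset.univ.filter
        (fun s' : Σ i : Fin n, Fin (p i) =>
          s'.1 < (e.symm r).1 ∨ (s'.1 = (e.symm r).1 ∧ s'.2.val < ((e.symm r).2 : ℕ)))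
      = (Finset.univ.filter (fun s' : Σ i : Fin n, Fin (p i) =>
          s'.1 = (e.symm r).1 ∧ s'.2.val < ((e.symm r).2 : ℕ)))
        ∪ (Finset.univ.filter (fun s' : Σ i : Fin n, Fin (p i) =>
          s'.1 < (e.symm r).1)) := by
      ext s'
      simp only [Finset.mem_filter, Finset.mem_union, Finset.mem_univ, true_and]
      tauto
    rw [hunion, Finset.prod_union]
    · congr 1
      · -- the block-i part
        have hconst : ∀ s' ∈ Finset.univ.filter (fun s' : Σ i : Fin n, Fin (p i) =>
            s'.1 = (e.symm r).1 ∧ s'.2.val < ((e.symm r).2 : ℕ)),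
            (X - C (α s'.1)) = (X - C (α (e.symm r).1)) := by
          intro s' hs'
          rw [(Finset.mem_filter.mp hs').2.1]
        rw [Finset.prod_eq_pow_card hconst]
        congr 1
        have himg : Finset.univ.filter (fun s' : Σ i : Fin n, Fin (p i) =>
            s'.1 = (e.symm r).1 ∧ s'.2.val < ((e.symm r).2 : ℕ))
          = (Finset.univ.filter (fun t : Fin (p (e.symm r).1) =>
              (t : ℕ) < ((e.symm r).2 : ℕ))).image (Sigma.mk (e.symm r).1) := by
          ext ⟨l, t⟩
          simp only [Finset.mem_filter, Finset.mem_univ, true_and, Finset.mem_image]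
          constructor
          · rintro ⟨rfl, h⟩
            exact ⟨t, h, rfl⟩
          · rintro ⟨t', ht', heq⟩
            obtain ⟨h1, h2⟩ := Sigma.mk.inj_iff.mp heq.symm
            subst h1
            rw [← eq_of_heq h2] at ht'
            exact ⟨rfl, ht'⟩
        rw [himg, Finset.card_image_of_injective _ sigma_mk_injective,
          card_filter_val_lt _ (le_of_lt (e.symm r).2.isLt)]
      · -- the earlier-blocks part
        have hsig : Finset.univ.filter (fun s' : Σ i : Fin n, Fin (p i) =>
            s'.1 < (e.symm r).1)
          = (Finset.univ.filter (fun l => l < (e.symm r).1)).sigma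
              (fun _ => Finset.univ) := by
          ext ⟨l, t⟩
          simp [Finset.mem_sigma]
        rw [hsig, Finset.prod_sigma]
        apply Finset.prod_congr rfl
        intro l _
        simp
    · -- disjointness
      rw [Finset.disjoint_left]
      rintro s' hs' hs''
      have h1 := (Finset.mem_filter.mp hs').2.1
      have h2 := (Finset.mem_filter.mp hs'').2
      rw [h1] at h2
      exact lt_irrefl _ h2
  -- diagonal values
  have hdiagval : ∀ r : Fin N, A r r
      = (Nat.factorial ((e.symm r).2 : ℕ) : ℂ) * α (e.symm r).1 ^ ((e.symm r).2 : ℕ) *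
        ∏ l ∈ Finset.univ.filter (fun l => l < (e.symm r).1),
          (α (e.symm r).1 - α l) ^ (p l) := by
    intro r
    rw [hAentry r r, hfact r, qop_iter_eval_diag]
    congr 1
    rw [eval_prod]
    apply Finset.prod_congr rfl
    intro l _
    simp
  -- determinant of Cm is 1
  have hCmtri : Cm.BlockTriangular id := by
    intro j k hk
    have hk' : (k : ℕ) < (j : ℕ) := hk
    show (P k).coeff (j : ℕ) = 0
    apply coeff_eq_zero_of_natDegree_lt
    rw [hPdeg k]
    exact hk'
  have hCmdet : Cm.det = 1 := by
    rw [Matrix.det_of_upperTriangular hCmtri]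
    apply Finset.prod_eq_one
    intro k _
    show (P k).coeff (k : ℕ) = 1
    rw [← hPdeg k]
    exact (hPmonic k).coeff_natDegree
  -- determinant of A
  have hAtri : A.BlockTriangular OrderDual.toDual := by
    intro r k hk
    have hrk : r < k := hk
    rw [hAentry r k]
    exact qop_iter_eval_zero x _ _ _ (hdvd r k hrk)
  have hAdet : A.det = ∏ r, A r r := Matrix.det_of_lowerTriangular A hAtri
  have hMdet : M.det = ∏ r, A r r := by
    have h1 : A.det = M.det * Cm.det := by rw [hA, Matrix.det_mul]
    rw [hCmdet, mul_one] at h1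
    rw [← h1, hAdet]
  -- the Wronskian in terms of M
  have hdWr : dWr F x
      = (∏ r : Fin N, Complex.exp (x * Complex.log (α (e.symm r).1))) * M.det := by
    unfold dWr
    have hmat : (Matrix.of fun r j : Fin N => F r (x + (j : ℕ)))
        = Matrix.of (fun r j : Fin N =>
            Complex.exp (x * Complex.log (α (e.symm r).1)) * M r j) := by
      ext r j
      simp only [Matrix.of_apply]
      conv_lhs => rw [← e.apply_symm_apply r]
      rw [hF (e.symm r) (x + (j : ℕ))]
      rw [add_mul, Complex.exp_add]
      rw [Complex.exp_nat_mul, Complex.exp_log (hα0 _)]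
      simp only [hM, Matrix.of_apply]
      ring
    rw [hmat]
    exact Matrix.det_mul_column _ M
  -- transport products over the equivalence
  have hExpProd : (∏ r : Fin N, Complex.exp (x * Complex.log (α (e.symm r).1)))
      = ∏ i, Complex.exp (x * Complex.log (α i)) ^ p i := by
    rw [Equiv.prod_comp e.symm (fun s : Σ i : Fin n, Fin (p i) =>
      Complex.exp (x * Complex.log (α s.1)))]
    rw [← Finset.univ_sigma_univ, Finset.prod_sigma]
    apply Finset.prod_congr rfl
    intro i _
    show (∏ _t : Fin (p i), Complex.exp (x * Complex.log (α i))) = _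
    rw [Finset.prod_const, Finset.card_univ, Fintype.card_fin]
  have hDiagProd : (∏ r : Fin N, A r r)
      = ∏ i, ((∏ s ∈ Finset.Ico 1 (p i), α i ^ s * (Nat.factorial s : ℂ)) *
          ∏ l ∈ Finset.univ.filter (fun l => l < i), (α i - α l) ^ (p l * p i)) := by
    rw [Finset.prod_congr rfl (fun r _ => hdiagval r)]
    rw [Equiv.prod_comp e.symm (fun s : Σ i : Fin n, Fin (p i) =>
      (Nat.factorial (s.2 : ℕ) : ℂ) * α s.1 ^ (s.2 : ℕ) *
        ∏ l ∈ Finset.univ.filter (fun l => l < s.1), (α s.1 - α l) ^ (p l))]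
    rw [← Finset.univ_sigma_univ, Finset.prod_sigma]
    apply Finset.prod_congr rfl
    intro i _
    show (∏ t : Fin (p i), ((Nat.factorial (t : ℕ) : ℂ) * α i ^ (t : ℕ) *
      ∏ l ∈ Finset.univ.filter (fun l => l < i), (α i - α l) ^ (p l))) = _
    rw [Finset.prod_mul_distrib, Finset.prod_const, Finset.card_univ, Fintype.card_fin]
    congr 1
    · -- the factorial-power part
      rw [Fin.prod_univ_eq_prod_range
        (fun s => (Nat.factorial s : ℂ) * α i ^ s)]
      rw [Finset.range_eq_Ico, Finset.prod_eq_prod_Ico_succ_bot (hp i)]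
      simp only [Nat.factorial_zero, Nat.cast_one, pow_zero, mul_one, one_mul]
      apply Finset.prod_congr rfl
      intro s _
      ring
    · -- the cross part
      rw [← Finset.prod_pow]
      apply Finset.prod_congr rfl
      intro l _
      rw [← pow_mul]
  constructor
  · rw [hdWr, hMdet, hExpProd, hDiagProd]
    rw [Finset.prod_mul_distrib, Finset.prod_mul_distrib]
    ring
  · rw [hdWr, hMdet]
    apply mul_ne_zero
    · rw [hExpProd]
      apply Finset.prod_ne_zero_iff.mpr
      intro i _
      exact pow_ne_zero _ (Complex.exp_ne_zero _)
    · rw [hDiagProd]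
      apply Finset.prod_ne_zero_iff.mpr
      intro i _
      apply mul_ne_zero
      · apply Finset.prod_ne_zero_iff.mpr
        intro s _
        exact mul_ne_zero (pow_ne_zero _ (hα0 i))
          (Nat.cast_ne_zero.mpr (Nat.factorial_ne_zero s))
      · apply Finset.prod_ne_zero_iff.mpr
        intro l hl
        have hli : l < i := (Finset.mem_filter.mp hl).2
        apply pow_ne_zero
        apply sub_ne_zero.mpr
        exact hαinj.ne (ne_of_gt hli)

/-- Fix distinct nonzero `α₁,…,αₙ` and positive integers `p₁,…,pₙ`.
Enumerate the quasi-exponentials `αᵢˣ xᵖ` (`i = 1,…,n`, `p = 0,…,pᵢ−1`) in lexicographic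
order (via an order isomorphism `e` from the sigma type with the lexicographic order to
`Fin (∑ pᵢ)`). Then their discrete Wronskian equals
`∏ᵢ( αᵢ^{pᵢ x} ∏_{s=1}^{pᵢ−1} αᵢˢ s! ) · ∏_{i<j} (αⱼ − αᵢ)^{pᵢ pⱼ}`;
in particular it is a nowhere-vanishing function of `x`. -/
theorem stmt5 {n : ℕ} (α : Fin n → ℂ) (p : Fin n → ℕ)
    (hα0 : ∀ i, α i ≠ 0) (hαinj : Function.Injective α) (hp : ∀ i, 0 < p i)
    (e : (Σ i : Fin n, Fin (p i)) ≃ Fin (∑ i, p i))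
    (he : ∀ s t : Σ i : Fin n, Fin (p i),
      (s.1 < t.1 ∨ (s.1 = t.1 ∧ s.2.val < t.2.val)) → e s < e t)
    (F : Fin (∑ i, p i) → ℂ → ℂ)
    (hF : ∀ (s : Σ i : Fin n, Fin (p i)) (x : ℂ),
      F (e s) x = Complex.exp (x * Complex.log (α s.1)) * x ^ (s.2 : ℕ)) :
    ∀ x : ℂ,
      dWr F x =
        (∏ i, (Complex.exp (x * Complex.log (α i)) ^ p i *
          ∏ s ∈ Finset.Ico 1 (p i), α i ^ s * (Nat.factorial s : ℂ))) *
        ∏ j, ∏ i ∈ Finset.univ.filter (fun i => i < j), (α j - α i) ^ (p i * p j) ∧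
      dWr F x ≠ 0 := by
  intro x
  exact stmt5aux α p hα0 hαinj hp e he F hF x
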